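/- Let m, L, d be positive integers with d > m, L ≥ 2, and 1 ≤ w_s ≤ L. Then S(m,L,d,w_s) ≤ S(m,L−1,d−m,w_s−1). Concretely, deleting a fixed position (the same position of the same subblock in every codeword) from each codeword of an (m,L,d,w_s)-SECC yields an (m,L−1,d−m,w_s−1)-SECC of the same size. -/

import Mathlib

open Finset Filter

/-- Weight (number of ones) of a binary word. -/
def wt {n : ℕ} (x : Fin n → Bool) : ℕ := (Finset.univ.filter fun i => x i = true).card

/-- The index (in a word of length `m * L`) of position `j` of subblock `i`. -/
def subIdx (m L : ℕ) (i : Fin m) (j : Fin L) : Fin (m * L) :=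
  ⟨i.val * L + j.val, by
    have hj : j.val < L := j.isLt
    have hi : i.val + 1 ≤ m := i.isLt
    calc i.val * L + j.val < i.val * L + L := Nat.add_lt_add_left hj _
      _ = (i.val + 1) * L := by ring
      _ ≤ m * L := Nat.mul_le_mul hi (Nat.le_refl L)⟩

/-- The `i`-th subblock (of length `L`) of a binary word of length `m * L`. -/
def subblock (m L : ℕ) (x : Fin (m * L) → Bool) (i : Fin m) : Fin L → Bool :=
  fun j => x (subIdx m L i j)

/-- The CSCC space: binary words of length `m * L` each of whose `m` subblocks of
length `L` has weight exactly `w`. -/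
def CSCCspace (m L w : ℕ) : Set (Fin (m * L) → Bool) :=
  {x | ∀ i : Fin m, wt (subblock m L x i) = w}

/-- The SECC space: binary words of length `m * L` each of whose `m` subblocks of
length `L` has weight at least `w`. -/
def SECCspace (m L w : ℕ) : Set (Fin (m * L) → Bool) :=
  {x | ∀ i : Fin m, w ≤ wt (subblock m L x i)}

/-- A code with minimum distance `d` inside the space `Sp`. -/
def isCode {n : ℕ} (Sp : Set (Fin n → Bool)) (d : ℕ) (C : Finset (Fin n → Bool)) : Prop :=
  (↑C : Set (Fin n → Bool)) ⊆ Sp ∧ ∀ x ∈ C, ∀ y ∈ C, x ≠ y → d ≤ hammingDist x y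

/-- The ball of radius `t` around `x`, taken inside the space `Sp`. -/
def ball {n : ℕ} (Sp : Set (Fin n → Bool)) (x : Fin n → Bool) (t : ℕ) :
    Set (Fin n → Bool) :=
  {y | y ∈ Sp ∧ hammingDist x y ≤ t}

/-- `C(m,L,d,w)`: the maximum size of an `(m,L,d,w)`-CSCC. -/
noncomputable def maxCSCC (m L d w : ℕ) : ℕ :=
  sSup {k | ∃ C : Finset (Fin (m * L) → Bool), isCode (CSCCspace m L w) d C ∧ C.card = k}

/-- `S(m,L,d,w)`: the maximum size of an `(m,L,d,w)`-SECC. -/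
noncomputable def maxSECC (m L d w : ℕ) : ℕ :=
  sSup {k | ∃ C : Finset (Fin (m * L) → Bool), isCode (SECCspace m L w) d C ∧ C.card = k}

/-- `A(n,d,w)`: the maximum size of a constant weight code. -/
noncomputable def maxCWC (n d w : ℕ) : ℕ :=
  sSup {k | ∃ C : Finset (Fin n → Bool), isCode {x | wt x = w} d C ∧ C.card = k}

/-- `H(n,d,w)`: the maximum size of a heavy weight code. -/
noncomputable def maxHWC (n d w : ℕ) : ℕ :=
  sSup {k | ∃ C : Finset (Fin n → Bool), isCode {x | w ≤ wt x} d C ∧ C.card = k}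

/-- `A(n,d)`: the maximum size of a binary code of length `n` and distance `d`. -/
noncomputable def maxBinary (n d : ℕ) : ℕ :=
  sSup {k | ∃ C : Finset (Fin n → Bool),
    (∀ x ∈ C, ∀ y ∈ C, x ≠ y → d ≤ hammingDist x y) ∧ C.card = k}

/-- `A_q(n,d)`: the maximum size of a `q`-ary code of length `n` and distance `d`. -/
noncomputable def maxQary (q n d : ℕ) : ℕ :=
  sSup {k | ∃ C : Finset (Fin n → Fin q),
    (∀ x ∈ C, ∀ y ∈ C, x ≠ y → d ≤ hammingDist x y) ∧ C.card = k}

/-- The size of a radius-`r` CSCC ball: the sum over all tuples `(u_1, …, u_m)` with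
`0 ≤ u_i ≤ min{w, L-w}` and `2(u_1 + ⋯ + u_m) ≤ r` of `∏ i, C(w,u_i)·C(L-w,u_i)`. -/
def csccBallSize (m L w r : ℕ) : ℕ :=
  ∑ u ∈ (Finset.univ : Finset (Fin m → Fin (min w (L - w) + 1))).filter
      (fun u => 2 * (∑ i, (u i : ℕ)) ≤ r),
    ∏ i, (w.choose (u i : ℕ)) * ((L - w).choose (u i : ℕ))

/-- The binary entropy function (base-2 logarithms, `h 0 = h 1 = 0`). -/
noncomputable def binent (p : ℝ) : ℝ :=
  -(p * Real.logb 2 p) - (1 - p) * Real.logb 2 (1 - p)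

/-- The asymptotic CSCC rate `γ(L,δ,w/L)`. -/
noncomputable def gammaRate (L : ℕ) (δ : ℝ) (w : ℕ) : ℝ :=
  Filter.limsup (fun m : ℕ =>
    Real.logb 2 (maxCSCC m L ⌊(m : ℝ) * L * δ⌋₊ w) / ((m : ℝ) * L)) Filter.atTop

/-- The asymptotic SECC rate `σ(L,δ,w/L)`. -/
noncomputable def sigmaRate (L : ℕ) (δ : ℝ) (w : ℕ) : ℝ :=
  Filter.limsup (fun m : ℕ =>
    Real.logb 2 (maxSECC m L ⌊(m : ℝ) * L * δ⌋₊ w) / ((m : ℝ) * L)) Filter.atTop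

/-! Delete the last position of every subblock. Each subblock loses at most one of its ones,
and two words lose at most `m` of their disagreements, so a code of distance `d > m` is mapped
injectively onto a code of distance `d - m`. -/

theorem hammingDist_le_hammingDist_comp_add {ι κ β : Type*} [Fintype ι] [Fintype κ]
    [DecidableEq β] {e : ι → κ} (he : Function.Injective e) (x y : κ → β) :
    hammingDist x y ≤ hammingDist (x ∘ e) (y ∘ e) + (Fintype.card κ - Fintype.card ι) := by
  classical
  let e' : ι ↪ κ := ⟨e, he⟩
  have hcover : ({k | x k ≠ y k} : Finset κ) ⊆
      ({i | x (e i) ≠ y (e i)} : Finset ι).map e' ∪ (univ.map e')ᶜ := by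
    intro k hk
    by_cases hke : k ∈ univ.map e'
    · obtain ⟨i, -, rfl⟩ := mem_map.mp hke
      exact mem_union_left _
        (mem_map_of_mem _ (mem_filter.mpr ⟨mem_univ i, (mem_filter.mp hk).2⟩))
    · exact mem_union_right _ (mem_compl.mpr hke)
  calc hammingDist x y ≤ #(({i | x (e i) ≠ y (e i)} : Finset ι).map e' ∪ (univ.map e')ᶜ) :=
        card_le_card hcover
    _ ≤ _ := card_union_le _ _
    _ = hammingDist (x ∘ e) (y ∘ e) + (Fintype.card κ - Fintype.card ι) := by
        rw [card_map, card_compl, card_map, card_univ]; rfl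

theorem wt_eq_hammingDist {n : ℕ} (x : Fin n → Bool) : wt x = hammingDist x fun _ => false := by
  simp [wt, hammingDist]

theorem wt_le_wt_comp_add {n n' : ℕ} {e : Fin n' → Fin n} (he : Function.Injective e)
    (x : Fin n → Bool) : wt x ≤ wt (x ∘ e) + (n - n') := by
  simpa [wt_eq_hammingDist] using hammingDist_le_hammingDist_comp_add he x fun _ => false

theorem subIdx_eq_finProdFinEquiv (m L : ℕ) (i : Fin m) (j : Fin L) :
    subIdx m L i j = finProdFinEquiv (i, j) :=
  Fin.ext (by simp [subIdx, finProdFinEquiv, Nat.add_comm, Nat.mul_comm])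

section Puncture

variable (m L : ℕ)

def punctureIdx (k : Fin (m * L)) : Fin (m * (L + 1)) :=
  subIdx m (L + 1) (finProdFinEquiv.symm k).1 (finProdFinEquiv.symm k).2.castSucc

theorem punctureIdx_subIdx (i : Fin m) (j : Fin L) :
    punctureIdx m L (subIdx m L i j) = subIdx m (L + 1) i j.castSucc := by
  simp [punctureIdx, subIdx_eq_finProdFinEquiv]

theorem punctureIdx_injective : Function.Injective (punctureIdx m L) := by
  intro k k' h
  simp only [punctureIdx, subIdx_eq_finProdFinEquiv, EmbeddingLike.apply_eq_iff_eq, Prod.mk.injEq,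
    Fin.castSucc_inj] at h
  exact finProdFinEquiv.symm.injective (Prod.ext h.1 h.2)

def puncture (x : Fin (m * (L + 1)) → Bool) : Fin (m * L) → Bool :=
  x ∘ punctureIdx m L

theorem subblock_puncture (x : Fin (m * (L + 1)) → Bool) (i : Fin m) :
    subblock m L (puncture m L x) i = subblock m (L + 1) x i ∘ Fin.castSucc := by
  funext j
  simp [subblock, puncture, punctureIdx_subIdx]

theorem hammingDist_le_hammingDist_puncture_add (x y : Fin (m * (L + 1)) → Bool) :
    hammingDist x y ≤ hammingDist (puncture m L x) (puncture m L y) + m := by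
  have h := hammingDist_le_hammingDist_comp_add (punctureIdx_injective m L) x y
  have hcard : m * (L + 1) - m * L = m := by rw [Nat.mul_succ, Nat.add_sub_cancel_left]
  rwa [Fintype.card_fin, Fintype.card_fin, hcard] at h

theorem puncture_mapsTo_SECCspace (w : ℕ) :
    Set.MapsTo (puncture m L) (SECCspace m (L + 1) w) (SECCspace m L (w - 1)) := by
  intro x hx i
  have h := wt_le_wt_comp_add (Fin.castSucc_injective L) (subblock m (L + 1) x i)
  rw [Nat.add_sub_cancel_left, ← subblock_puncture] at h
  have hw := hx i
  omega

end Puncture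

section CodeImage

variable {n n' d r : ℕ} {Sp : Set (Fin n → Bool)} {Sp' : Set (Fin n' → Bool)}
  {f : (Fin n → Bool) → (Fin n' → Bool)} {C : Finset (Fin n → Bool)}

theorem isCode.image (hC : isCode Sp d C) (hSp : Set.MapsTo f Sp Sp')
    (hf : ∀ x y, hammingDist x y ≤ hammingDist (f x) (f y) + r) :
    isCode Sp' (d - r) (C.image f) := by
  refine ⟨?_, ?_⟩
  · simpa only [coe_image] using (hSp.mono_left hC.1).image_subset
  · simp only [mem_image]
    rintro _ ⟨x, hx, rfl⟩ _ ⟨y, hy, rfl⟩ hxy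
    have hdxy := hC.2 x hx y hy (fun h => hxy (h ▸ rfl))
    have hfxy := hf x y
    omega

theorem isCode.injOn (hC : isCode Sp d C)
    (hf : ∀ x y, hammingDist x y ≤ hammingDist (f x) (f y) + r) (hrd : r < d) :
    Set.InjOn f C := by
  intro x hx y hy hxy
  by_contra hne
  have hdxy := hC.2 x hx y hy hne
  have hfxy := hf x y
  rw [hxy, hammingDist_self] at hfxy
  omega

theorem sSup_codeCard_le
    (h : ∀ C : Finset (Fin n → Bool), isCode Sp d C → ∃ C' : Finset (Fin n' → Bool),
      isCode Sp' r C' ∧ C'.card = C.card) :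
    sSup {k | ∃ C : Finset (Fin n → Bool), isCode Sp d C ∧ C.card = k} ≤
      sSup {k | ∃ C : Finset (Fin n' → Bool), isCode Sp' r C ∧ C.card = k} := by
  have hbdd : BddAbove {k | ∃ C : Finset (Fin n' → Bool), isCode Sp' r C ∧ C.card = k} :=
    ⟨Fintype.card (Fin n' → Bool), by rintro _ ⟨C, -, rfl⟩; exact card_le_univ C⟩
  refine csSup_le' fun k ⟨C, hC, hk⟩ => le_csSup hbdd ?_
  obtain ⟨C', hC', hcard⟩ := h C hC
  exact ⟨C', hC', hcard.trans hk⟩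

end CodeImage

theorem stmt_7_general (m L d w : ℕ) (hL : 2 ≤ L) (hd : m < d) :
    maxSECC m L d w ≤ maxSECC m (L - 1) (d - m) (w - 1) := by
  obtain ⟨L, rfl⟩ : ∃ L', L = L' + 1 := ⟨L - 1, by omega⟩
  rw [Nat.add_sub_cancel]
  have hdist := hammingDist_le_hammingDist_puncture_add m L
  exact sSup_codeCard_le fun C hC =>
    ⟨C.image (puncture m L), hC.image (puncture_mapsTo_SECCspace m L w) hdist,
      card_image_of_injOn (hC.injOn hdist hd)⟩

/-- Puncturing bound: if `d > m` then `S(m,L,d,w) ≤ S(m,L-1,d-m,w-1)`. -/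
theorem stmt_7 (m L d w : ℕ) (hm : 0 < m) (hL : 2 ≤ L) (hd : m < d)
    (hw1 : 1 ≤ w) (hw2 : w ≤ L) :
    maxSECC m L d w ≤ maxSECC m (L - 1) (d - m) (w - 1) :=
  stmt_7_general m L d w hL hd
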